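/- If f is analytic on the unit disk with Re f(z) < 1 and a_0 = f(0) \in [0,1), then the area S_r(f) of the image of |z| < r under f (counting multiplicity) satisfies S_r(f)/\pi = \sum_{n=1}^\infty n |a_n|^2 r^{2n} \le 4(1-a_0)^2 r^2/(1-r^2)^2 for all 0 \le r < 1. -/

import Mathlib

open Metric MeasureTheory Complex Real Filter

lemma key_int (k : ℤ) :
    ∫ θ in Set.Ioc (0:ℝ) (2*π), Complex.exp ((k:ℂ) * θ * I) = if k = 0 then (2*π:ℂ) else 0 := by
  rw [← intervalIntegral.integral_of_le (by positivity : (0:ℝ) ≤ 2*π)]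
  split_ifs with hk
  · subst hk; simp
  · have hc : (k:ℂ) * I ≠ 0 := by simp [Complex.ext_iff, hk]
    have : (fun θ:ℝ => Complex.exp ((k:ℂ) * θ * I)) = fun θ:ℝ => Complex.exp (((k:ℂ)*I) * θ) := by
      funext θ; ring_nf
    rw [this, integral_exp_mul_complex hc]
    have h2 : Complex.exp ((k:ℂ)*I*(2*π)) = 1 := by
      rw [show (k:ℂ)*I*(2*π) = (k:ℤ) * (2*π*I) by ring, Complex.exp_int_mul_two_pi_mul_I]
    simp [h2]

lemma habs (m : ℤ) (θ : ℝ) : ‖Complex.exp ((m:ℂ) * θ * I)‖ = 1 := by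
  rw [show ((m:ℂ) * θ * I) = (((m*θ:ℝ)):ℂ) * I by push_cast; ring, Complex.norm_exp_ofReal_mul_I]

lemma hS_aux {f : ℂ → ℂ} {a : ℕ → ℂ} {ρ : ℝ}
    (hsum : ∀ z ∈ ball (0 : ℂ) 1, HasSum (fun n => a n * z ^ n) (f z))
    (hρ0 : 0 ≤ ρ) (hρ1 : ρ < 1) :
    Summable (fun m => ‖a m‖ * ρ^m) := by
  set s : ℝ := (1+ρ)/2 with hs
  have hρs : ρ < s := by rw [hs]; linarith
  have hs0 : 0 < s := by rw [hs]; linarith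
  have hs1 : s < 1 := by rw [hs]; linarith
  have hzb : (s:ℂ) ∈ ball (0:ℂ) 1 := by
    simp [Complex.norm_real, _root_.abs_of_nonneg hs0.le, hs1]
  have hsm : Summable (fun m => a m * (s:ℂ)^m) := (hsum _ hzb).summable
  have hten : Tendsto (fun m => ‖a m‖ * s^m) atTop (nhds 0) := by
    have := hsm.tendsto_atTop_zero.norm
    simpa [Complex.norm_real, _root_.abs_of_nonneg hs0.le, mul_pow] using this
  have hev : ∀ᶠ m in atTop, ‖a m‖ * s^m ≤ 1 :=
    (hten.eventually (eventually_le_nhds one_pos))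
  apply summable_of_isBigO_nat (g := fun m => (ρ/s)^m)
    (summable_geometric_of_lt_one (by positivity) (by rw [div_lt_one hs0]; exact hρs))
  apply Asymptotics.IsBigO.of_bound 1
  filter_upwards [hev] with m hm
  have hsm0 : (0:ℝ) < s^m := by positivity
  have : ‖a m‖ * ρ^m = (‖a m‖ * s^m) * (ρ/s)^m := by
    clear_value s; rw [div_pow]; field_simp
  rw [Real.norm_of_nonneg (by positivity), Real.norm_of_nonneg (by positivity), this, one_mul]
  exact mul_le_of_le_one_left (by positivity) hm

lemma swap_int (c : ℕ → ℂ) (hc : Summable (fun m => ‖c m‖))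
    (g : ℝ → ℂ) (k : ℕ → ℤ)
    (hg : ∀ θ : ℝ, HasSum (fun m => c m * Complex.exp ((k m : ℂ) * θ * I)) (g θ)) :
    ∫ θ in Set.Ioc (0:ℝ) (2*π), g θ
      = ∑' m, c m * (if k m = 0 then (2*π:ℂ) else 0) := by
  have hFi : ∀ m, IntegrableOn (fun θ : ℝ => c m * Complex.exp ((k m : ℂ) * θ * I))
      (Set.Ioc (0:ℝ) (2*π)) := by
    intro m
    exact (Continuous.mul continuous_const (by fun_prop)).integrableOn_Ioc
  have hnorm : ∀ m (θ:ℝ), ‖c m * Complex.exp ((k m : ℂ) * θ * I)‖ = ‖c m‖ := by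
    intro m θ
    simp [habs]
  have hsumInt : Summable fun m => ∫ θ in Set.Ioc (0:ℝ) (2*π),
      ‖c m * Complex.exp ((k m : ℂ) * θ * I)‖ := by
    have : (fun m => ∫ θ in Set.Ioc (0:ℝ) (2*π),
        ‖c m * Complex.exp ((k m : ℂ) * θ * I)‖) = fun m => ‖c m‖ * (2*π) := by
      funext m
      simp only [hnorm]
      rw [setIntegral_const, measureReal_def, Real.volume_Ioc]
      rw [smul_eq_mul, ENNReal.toReal_ofReal (by simp; positivity)]
      ring
    rw [this]
    exact hc.mul_right _
  have := MeasureTheory.integral_tsum_of_summable_integral_norm hFi hsumInt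
  rw [show (∫ θ in Set.Ioc (0:ℝ) (2*π), g θ)
      = ∫ θ in Set.Ioc (0:ℝ) (2*π), ∑' m, c m * Complex.exp ((k m : ℂ) * θ * I) from
    integral_congr_ae (Eventually.of_forall fun θ => ((hg θ).tsum_eq).symm), ← this]
  congr 1
  funext m
  rw [MeasureTheory.integral_const_mul, key_int]

lemma coeff_bound {f : ℂ → ℂ} {a : ℕ → ℂ} {a₀ : ℝ}
    (hsum : ∀ z ∈ ball (0 : ℂ) 1, HasSum (fun n => a n * z ^ n) (f z))
    (hre : ∀ z ∈ ball (0 : ℂ) 1, (f z).re < 1)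
    (ha0 : a 0 = (a₀ : ℂ)) (n : ℕ) (hn : 1 ≤ n) :
    ‖a n‖ ≤ 2 * (1 - a₀) := by
  have key : ∀ ρ : ℝ, ρ ∈ Set.Ioo (0:ℝ) 1 → ‖a n‖ * ρ^n ≤ 2 * (1 - a₀) := by
    rintro ρ ⟨hρ0, hρ1⟩
    set z : ℝ → ℂ := fun θ => (ρ:ℂ) * Complex.exp (θ * I) with hzdef
    have hzabs : ∀ θ : ℝ, ‖z θ‖ = ρ := by
      intro θ; simp [hzdef, Complex.norm_exp_ofReal_mul_I, _root_.abs_of_nonneg hρ0.le]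
    have hz : ∀ θ : ℝ, z θ ∈ ball (0:ℂ) 1 := by
      intro θ; simp only [mem_ball, dist_zero_right, hzabs]; exact hρ1
    have hS : Summable (fun m => ‖a m‖ * ρ^m) := hS_aux hsum hρ0.le hρ1
    have hc : Summable (fun m => ‖a m * (ρ:ℂ)^m‖) := by
      simpa [norm_mul, norm_pow, Complex.norm_real, _root_.abs_of_nonneg hρ0.le] using hS
    -- Claim A
    have lemA : ∀ k : ℕ, ∫ θ in Set.Ioc (0:ℝ) (2*π),
        f (z θ) * Complex.exp (-(k:ℂ) * θ * I) = 2*π * (a k * (ρ:ℂ)^k) := by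
      intro k
      rw [swap_int (fun m => a m * (ρ:ℂ)^m) hc _ (fun m => (m:ℤ) - k) ?_]
      · rw [tsum_eq_single k ?_]
        · simp [mul_comm]
        · intro m hm
          rw [if_neg (by omega), mul_zero]
      · intro θ
        have h := ((hsum (z θ)) (hz θ)).mul_right (Complex.exp (-(k:ℂ) * θ * I))
        convert h using 2 with m
        · rfl
        simp only [Int.cast_sub, Int.cast_natCast, hzdef]
        have he : Complex.exp (((m:ℂ) - (k:ℂ)) * (θ:ℂ) * I)
            = Complex.exp ((m:ℂ)*((θ:ℂ)*I)) * Complex.exp (-(k:ℂ)*θ*I) := by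
          rw [← Complex.exp_add]; ring_nf
        rw [mul_pow, ← Complex.exp_nat_mul, he]
        ring
    -- Claim B
    have lemB : ∫ θ in Set.Ioc (0:ℝ) (2*π),
        (starRingEnd ℂ) (f (z θ)) * Complex.exp (-(n:ℂ) * θ * I) = 0 := by
      rw [swap_int (fun m => (starRingEnd ℂ) (a m) * (ρ:ℂ)^m) (by simpa using hc) _
        (fun m => -(m:ℤ) - n) ?_]
      · convert tsum_zero with m
        rw [if_neg (by omega), mul_zero]
      · intro θ
        have h := (((hsum (z θ)) (hz θ)).map (starRingEnd ℂ)
          continuous_conj).mul_right (Complex.exp (-(n:ℂ) * θ * I))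
        convert h using 2 with m
        · rfl
        have h1 : (starRingEnd ℂ) ((θ:ℂ) * I) = -((θ:ℂ) * I) := by
          simp [Complex.ext_iff]
        simp only [Function.comp_apply, map_mul, map_pow, hzdef, Complex.conj_ofReal,
          ← Complex.exp_conj, h1, Int.cast_sub, Int.cast_neg, Int.cast_natCast]
        have he : Complex.exp ((-(m:ℂ) - (n:ℂ)) * (θ:ℂ) * I)
            = Complex.exp ((m:ℂ)*(-((θ:ℂ)*I))) * Complex.exp (-(n:ℂ)*θ*I) := by
          rw [← Complex.exp_add]; ring_nf
        rw [mul_pow, ← Complex.exp_nat_mul, he]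
        ring
    -- continuity
    have hcont : Continuous fun θ : ℝ => f (z θ) := by
      have heq : (fun θ : ℝ => f (z θ)) = fun θ => ∑' m, a m * (z θ)^m :=
        funext fun θ => ((hsum _ (hz θ)).tsum_eq).symm
      rw [heq]
      refine continuous_tsum (fun m => by fun_prop) hS (fun m θ => ?_)
      rw [norm_mul, norm_pow, hzabs]
    set e : ℝ → ℂ := fun θ => Complex.exp (-(n:ℂ) * θ * I) with hedef
    have hecont : Continuous e := by rw [hedef]; fun_prop
    have hInt1 : IntegrableOn (fun θ => f (z θ) * e θ) (Set.Ioc (0:ℝ) (2*π)) :=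
      (hcont.mul hecont).integrableOn_Ioc
    have hInt2 : IntegrableOn (fun θ => (starRingEnd ℂ) (f (z θ)) * e θ)
        (Set.Ioc (0:ℝ) (2*π)) :=
      ((continuous_conj.comp hcont).mul hecont).integrableOn_Ioc
    have hIntf : IntegrableOn (fun θ => f (z θ)) (Set.Ioc (0:ℝ) (2*π)) :=
      hcont.integrableOn_Ioc
    have h2e : ∫ θ in Set.Ioc (0:ℝ) (2*π), (2:ℂ) * e θ = 0 := by
      rw [MeasureTheory.integral_const_mul]
      have h := key_int (-(n:ℤ))
      rw [if_neg (by omega)] at h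
      push_cast at h
      simp only [hedef]
      rw [h, mul_zero]
    have hmain : ∫ θ in Set.Ioc (0:ℝ) (2*π), ((2*((f (z θ)).re :ℂ) - 2) * e θ)
        = 2*π*(a n * (ρ:ℂ)^n) := by
      have hsplit : ∀ θ:ℝ, (2*((f (z θ)).re:ℂ) - 2) * e θ
          = f (z θ) * e θ + (starRingEnd ℂ) (f (z θ)) * e θ - 2 * e θ := by
        intro θ
        rw [show (2*((f (z θ)).re:ℂ)) = f (z θ) + (starRingEnd ℂ) (f (z θ)) by
          rw [Complex.add_conj]; push_cast; ring]
        ring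
      simp only [hsplit]
      have hInt12 : IntegrableOn (fun θ => f (z θ) * e θ + (starRingEnd ℂ) (f (z θ)) * e θ)
          (Set.Ioc (0:ℝ) (2*π)) := hInt1.add hInt2
      rw [integral_sub hInt12 ((show Continuous fun θ => (2:ℂ) * e θ from continuous_const.mul hecont).integrableOn_Ioc),
        integral_add hInt1 hInt2, lemA n, lemB, h2e]
      ring
    have hnormle : ‖2*π*(a n * (ρ:ℂ)^n)‖
        ≤ ∫ θ in Set.Ioc (0:ℝ) (2*π), (2 - 2*(f (z θ)).re) := by
      rw [← hmain]
      refine (norm_integral_le_integral_norm _).trans_eq ?_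
      refine integral_congr_ae (Eventually.of_forall fun θ => ?_)
      dsimp only
      rw [norm_mul]
      have he1 : ‖e θ‖ = 1 := by
        simp only [hedef]
        have := habs (-(n:ℤ)) θ
        push_cast at this
        exact this
      rw [he1, mul_one]
      have hx := hre _ (hz θ)
      rw [show (2*((f (z θ)).re:ℂ) - 2) = ((2*(f (z θ)).re - 2 : ℝ) : ℂ) by push_cast; ring,
        Complex.norm_real, Real.norm_eq_abs, abs_of_nonpos (by linarith)]
      ring
    have hre_int : ∫ θ in Set.Ioc (0:ℝ) (2*π), (f (z θ)).re = 2*π*a₀ := by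
      have h0 := lemA 0
      simp only [Nat.cast_zero, neg_zero, zero_mul, Complex.exp_zero, mul_one, pow_zero] at h0
      have hR := integral_re hIntf
      simp only [RCLike.re_to_complex] at hR
      rw [hR, h0, ha0]
      simp
    have hval : ∫ θ in Set.Ioc (0:ℝ) (2*π), (2 - 2*(f (z θ)).re) = 4*π*(1 - a₀) := by
      have hic : IntegrableOn (fun _ : ℝ => (2:ℝ)) (Set.Ioc (0:ℝ) (2*π)) :=
        continuous_const.integrableOn_Ioc
      have hir : IntegrableOn (fun θ => 2*(f (z θ)).re) (Set.Ioc (0:ℝ) (2*π)) :=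
        (continuous_const.mul (Complex.continuous_re.comp hcont)).integrableOn_Ioc
      rw [integral_sub hic hir, MeasureTheory.integral_const_mul, hre_int,
        setIntegral_const, measureReal_def, Real.volume_Ioc, smul_eq_mul,
        ENNReal.toReal_ofReal (by simp; positivity)]
      ring
    have habs2 : ‖2*π*(a n * (ρ:ℂ)^n)‖ = 2*π*(‖a n‖ * ρ^n) := by
      simp [norm_mul, norm_pow, Complex.norm_real, _root_.abs_of_nonneg Real.pi_pos.le, map_pow,
        _root_.abs_of_nonneg hρ0.le]
    rw [habs2, hval] at hnormle
    nlinarith [Real.pi_pos]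
  -- limit ρ → 1⁻
  have hten : Tendsto (fun ρ:ℝ => ‖a n‖ * ρ^n) (nhdsWithin 1 (Set.Iio 1))
      (nhds (‖a n‖)) := by
    have hc : Tendsto (fun ρ:ℝ => ‖a n‖ * ρ^n) (nhds 1)
        (nhds (‖a n‖ * 1^n)) :=
      ((continuous_const.mul (continuous_pow n)).continuousAt)
    simpa using hc.mono_left nhdsWithin_le_nhds
  refine le_of_tendsto hten ?_
  filter_upwards [Ioo_mem_nhdsLT_of_mem (Set.mem_Ioc.2 ⟨zero_lt_one, le_refl 1⟩)] with ρ hρ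
  exact key ρ hρ

/-- Area bound for `f` with `Re f < 1` and `f(0) = a₀ ∈ [0,1)`:
`S_r(f)/π = ∑ n |aₙ|² r^{2n} ≤ 4 (1-a₀)² r²/(1-r²)²`. -/
theorem area_bound (f : ℂ → ℂ) (a : ℕ → ℂ) (a₀ : ℝ)
    (hsum : ∀ z ∈ ball (0 : ℂ) 1, HasSum (fun n => a n * z ^ n) (f z))
    (hre : ∀ z ∈ ball (0 : ℂ) 1, (f z).re < 1)
    (ha0 : a 0 = (a₀ : ℂ)) (h0 : 0 ≤ a₀) (h1 : a₀ < 1)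
    (r : ℝ) (hr0 : 0 ≤ r) (hr1 : r < 1) :
    ∑' n : ℕ, (n : ℝ) * ‖a n‖ ^ 2 * r ^ (2 * n)
      ≤ 4 * (1 - a₀) ^ 2 * r ^ 2 / (1 - r ^ 2) ^ 2 := by
  have hr2 : ‖r^2‖ < 1 := by
    rw [Real.norm_eq_abs, _root_.abs_of_nonneg (by positivity)]
    exact pow_lt_one₀ hr0 hr1 two_ne_zero
  have hb : ∀ n : ℕ, (n:ℝ) * ‖a n‖^2 * r^(2*n)
      ≤ 4*(1-a₀)^2 * ((n:ℝ) * (r^2)^n) := by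
    intro n
    rcases Nat.eq_zero_or_pos n with h|h
    · subst h; simp
    · have h1n := coeff_bound hsum hre ha0 n h
      have h2 : ‖a n‖^2 ≤ (2*(1-a₀))^2 :=
        pow_le_pow_left₀ (norm_nonneg _) h1n 2
      have hrn : (0:ℝ) ≤ (r^2)^n := by positivity
      rw [pow_mul]
      calc (n:ℝ) * ‖a n‖^2 * (r^2)^n
          ≤ (n:ℝ) * (2*(1-a₀))^2 * (r^2)^n := by
            apply mul_le_mul_of_nonneg_right _ hrn
            exact mul_le_mul_of_nonneg_left h2 (Nat.cast_nonneg n)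
        _ = 4*(1-a₀)^2 * ((n:ℝ) * (r^2)^n) := by ring
  have hgsum : Summable (fun n : ℕ => 4*(1-a₀)^2 * ((n:ℝ) * (r^2)^n)) := by
    apply Summable.mul_left
    exact (hasSum_coe_mul_geometric_of_norm_lt_one hr2).summable
  have hfsum : Summable (fun n : ℕ => (n:ℝ) * ‖a n‖^2 * r^(2*n)) :=
    Summable.of_nonneg_of_le (fun n => by positivity) hb hgsum
  calc ∑' n : ℕ, (n : ℝ) * ‖a n‖ ^ 2 * r ^ (2 * n)
      ≤ ∑' n : ℕ, 4*(1-a₀)^2 * ((n:ℝ) * (r^2)^n) := Summable.tsum_le_tsum hb hfsum hgsum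
    _ = 4*(1-a₀)^2 * ∑' n : ℕ, (n:ℝ) * (r^2)^n := tsum_mul_left
    _ = 4*(1-a₀)^2 * (r^2/(1-r^2)^2) := by
        rw [tsum_coe_mul_geometric_of_norm_lt_one hr2]
    _ = 4 * (1 - a₀) ^ 2 * r ^ 2 / (1 - r ^ 2) ^ 2 := by ring
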